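/- Consider the k-linear map d : k[z] ⊕ k[w] → k[z, z⁻¹] defined by d(f, g) = f(z) - z⁻² · g(z⁻¹). Then the cokernel of d is a one-dimensional k-vector space, spanned by the class of z⁻¹. (This computes H¹(ℙ¹, O(-2)) via the Čech complex.) -/

import Mathlib

open LaurentPolynomial

variable (k : Type*) [Field k]

/-- The map `d : k[z] ⊕ k[w] → k[z, z⁻¹]`, `d(f, g) = f(z) - z⁻²·g(z⁻¹)`:
the Čech differential computing `H¹(ℙ¹, O(-2))`. -/
noncomputable def cechMapMinusTwo :
    (Polynomial k × Polynomial k) →ₗ[k] LaurentPolynomial k :=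
  (Polynomial.toLaurentAlg (R := k)).toLinearMap.comp (LinearMap.fst k _ _)
    - (LinearMap.mulLeft k (T (-2) : LaurentPolynomial k)).comp
        ((Polynomial.aeval (T (-1) : LaurentPolynomial k)).toLinearMap.comp
          (LinearMap.snd k _ _))

/-!
Monomials `z^n` with `n ≥ 0` are `d(z^n, 0)` and those with `n ≤ -2` are `d(0, -w^(-2-n))`, while
neither summand of `d(f, g)` ever produces `z⁻¹`. So the image of `d` is exactly the kernel of the
coefficient of `z⁻¹`, a surjective functional to `k` that sends `z⁻¹` to `1`.
-/

open Module

lemma coord_basis_T {R : Type*} [Semiring R] (m n : ℤ) :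
    (AddMonoidAlgebra.basis ℤ R).coord m (T n) = if n = m then 1 else 0 := by
  change (AddMonoidAlgebra.basis ℤ R).coord m (AddMonoidAlgebra.basis ℤ R n) = _
  rw [Basis.coord_apply, Basis.repr_self, Finsupp.single_apply]

section

variable {k}

lemma cechMapMinusTwo_apply (f g : Polynomial k) :
    cechMapMinusTwo k (f, g) =
      Polynomial.toLaurent f - T (-2) * Polynomial.aeval (T (-1) : LaurentPolynomial k) g := by
  simp [cechMapMinusTwo]

lemma range_cechMapMinusTwo_le_ker_coord :
    LinearMap.range (cechMapMinusTwo k) ≤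
      LinearMap.ker ((AddMonoidAlgebra.basis ℤ k).coord (-1)) := by
  rw [LinearMap.range_le_ker_iff]
  ext n : 3
  · simp only [LinearMap.comp_apply, LinearMap.inl_apply, cechMapMinusTwo_apply,
      Polynomial.toLaurent_C_mul_T, map_one, one_mul, map_zero, mul_zero, sub_zero,
      coord_basis_T, LinearMap.zero_apply]
    exact if_neg (by omega)
  · simp only [LinearMap.comp_apply, LinearMap.inr_apply, cechMapMinusTwo_apply,
      Polynomial.aeval_monomial, map_one, one_mul, T_pow, ← T_add, map_zero, zero_sub, map_neg,
      coord_basis_T, LinearMap.zero_apply, neg_eq_zero]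
    exact if_neg (by omega)

lemma T_mem_range_cechMapMinusTwo {n : ℤ} (hn : n ≠ -1) :
    T n ∈ LinearMap.range (cechMapMinusTwo k) := by
  rcases le_or_gt 0 n with hn₀ | hn₀
  · refine ⟨(Polynomial.X ^ n.toNat, 0), ?_⟩
    simp [cechMapMinusTwo_apply, Polynomial.toLaurent_X_pow, hn₀]
  · refine ⟨(0, -Polynomial.X ^ (-2 - n).toNat), ?_⟩
    simp only [cechMapMinusTwo_apply, map_zero, map_neg, map_pow, Polynomial.aeval_X, T_pow,
      ← T_add, mul_neg, sub_neg_eq_add, zero_add]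
    congr 1
    omega

lemma ker_coord_le_range_cechMapMinusTwo :
    LinearMap.ker ((AddMonoidAlgebra.basis ℤ k).coord (-1)) ≤
      LinearMap.range (cechMapMinusTwo k) := by
  intro x hx
  rw [← x.sum_coeff_single]
  refine Submodule.finsuppSum_mem _ _ _ _ fun n hcoeff => ?_
  have hn : n ≠ -1 := by
    rintro rfl
    exact hcoeff hx
  rw [single_eq_C_mul_T, ← smul_eq_C_mul]
  exact Submodule.smul_mem _ _ (T_mem_range_cechMapMinusTwo hn)

lemma range_cechMapMinusTwo :
    LinearMap.range (cechMapMinusTwo k) =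
      LinearMap.ker ((AddMonoidAlgebra.basis ℤ k).coord (-1)) :=
  le_antisymm range_cechMapMinusTwo_le_ker_coord ker_coord_le_range_cechMapMinusTwo

end

/-- The cokernel of `d(f,g) = f(z) - z⁻²·g(z⁻¹)` is a one-dimensional `k`-vector space,
spanned by the class of `z⁻¹`.  (This computes `H¹(ℙ¹, O(-2))` via the Čech complex.) -/
theorem coker_cechMapMinusTwo :
    Module.finrank k (LaurentPolynomial k ⧸ LinearMap.range (cechMapMinusTwo k)) = 1
      ∧ Submodule.span k
          {Submodule.Quotient.mk (p := LinearMap.range (cechMapMinusTwo k))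
            (T (-1) : LaurentPolynomial k)} = ⊤ := by
  set φ := (AddMonoidAlgebra.basis ℤ k).coord (-1)
  have hφ : φ (T (-1)) = 1 := (coord_basis_T (-1) (-1)).trans (if_pos rfl)
  have hsurj : Function.Surjective φ := fun c => ⟨c • T (-1), by simp [hφ]⟩
  let e := (Submodule.quotEquivOfEq _ _ range_cechMapMinusTwo).trans
    (φ.quotKerEquivOfSurjective hsurj)
  have hrank : finrank k (LaurentPolynomial k ⧸ LinearMap.range (cechMapMinusTwo k)) = 1 :=
    e.finrank_eq.trans (finrank_self k)
  have hne : Submodule.Quotient.mk (p := LinearMap.range (cechMapMinusTwo k))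
      (T (-1) : LaurentPolynomial k) ≠ 0 := by
    rw [Ne, Submodule.Quotient.mk_eq_zero, range_cechMapMinusTwo, LinearMap.mem_ker, hφ]
    exact one_ne_zero
  exact ⟨hrank, (finrank_eq_one_iff_of_nonzero _ hne).mp hrank⟩
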